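/- arXiv:2505.19711 — 3 statements merged into one kernel-verified Lean document; each statement's English description precedes it below -/
import Mathlib

section
/- Let b : ℕ → ℝ be a potential, T ≥ 1, and f, g : ℕ → ℝ controls. Define the Blagoveshchensky function ψ_{n,t} := Σ_{k=1}^{T} u^f_{k,n} u^g_{k,t}. Then ψ_{0,t} = 0 and ψ_{n,0} = 0 for all n, t ≥ 0, and for all 1 ≤ n ≤ T and 1 ≤ t ≤ T: ψ_{n,t+1} + ψ_{n,t−1} − ψ_{n+1,t} − ψ_{n−1,t} = g_t u^f_{1,n} − f_n u^g_{1,t}. -/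
/-- `sol b f t n` is the solution `u^f_{n,t}` of the discrete Schrödinger dynamical system
with potential `b` and boundary control `f`:
`u_{n,t+1} + u_{n,t-1} - u_{n+1,t} - u_{n-1,t} + b_n u_{n,t} = 0` for `n ≥ 1`, `t ≥ 0`,
`u_{n,-1} = u_{n,0} = 0` for `n ≥ 1`, and `u_{0,t} = f_t` for `t ≥ 0`
(the first argument is the time `t`, the second the space variable `n`). -/
noncomputable def sol (b f : ℕ → ℝ) : ℕ → ℕ → ℝ
  | 0, n => if n = 0 then f 0 else 0
  | 1, n => if n = 0 then f 1 else
      sol b f 0 (n + 1) + sol b f 0 (n - 1) - b n * sol b f 0 n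
  | (t + 2), n => if n = 0 then f (t + 2) else
      sol b f (t + 1) (n + 1) + sol b f (t + 1) (n - 1) - b n * sol b f (t + 1) n - sol b f t n

theorem sol_eq_zero (b f : ℕ → ℝ) : ∀ t k, t < k → sol b f t k = 0
  | 0, k, h => by rw [sol, if_neg (by omega)]
  | 1, k, h => by
      rw [sol, if_neg (by omega), sol_eq_zero b f 0 (k + 1) (by omega),
        sol_eq_zero b f 0 (k - 1) (by omega), sol_eq_zero b f 0 k (by omega)]
      ring
  | (t + 2), k, h => by
      rw [sol, if_neg (by omega), sol_eq_zero b f (t + 1) (k + 1) (by omega),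
        sol_eq_zero b f (t + 1) (k - 1) (by omega), sol_eq_zero b f (t + 1) k (by omega),
        sol_eq_zero b f t k (by omega)]
      ring

theorem sol_zero_right (b f : ℕ → ℝ) : ∀ t, sol b f t 0 = f t
  | 0 => by rw [sol, if_pos rfl]
  | 1 => by rw [sol, if_pos rfl]
  | (t + 2) => by rw [sol, if_pos rfl]

theorem sol_rec (b f : ℕ → ℝ) (t k : ℕ) (ht : 1 ≤ t) (hk : 1 ≤ k) :
    sol b f (t + 1) k =
      sol b f t (k + 1) + sol b f t (k - 1) - b k * sol b f t k - sol b f (t - 1) k := by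
  obtain ⟨s, rfl⟩ : ∃ s, t = s + 1 := ⟨t - 1, by omega⟩
  show sol b f (s + 2) k = _
  rw [sol, if_neg (by omega)]
  simp

/-- The Blagoveshchensky function `ψ_{n,t} = Σ_{k=1}^T u^f_{k,n} u^g_{k,t}` vanishes on the
boundary and satisfies the difference equation with right-hand side expressed through
boundary data. -/
theorem blagoveshchensky (b : ℕ → ℝ) (T : ℕ) (hT : 1 ≤ T) (f g : ℕ → ℝ)
    (psi : ℕ → ℕ → ℝ)
    (hpsi : ∀ n t, psi n t = ∑ k ∈ Finset.Icc 1 T, sol b f n k * sol b g t k) :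
    (∀ t, psi 0 t = 0) ∧ (∀ n, psi n 0 = 0) ∧
    (∀ n t, 1 ≤ n → n ≤ T → 1 ≤ t → t ≤ T →
      psi n (t + 1) + psi n (t - 1) - psi (n + 1) t - psi (n - 1) t =
        g t * sol b f n 1 - f n * sol b g t 1) := by
  refine ⟨?_, ?_, ?_⟩
  · intro t
    rw [hpsi]
    apply Finset.sum_eq_zero
    intro k hk
    rw [sol_eq_zero b f 0 k (by simp at hk; omega), zero_mul]
  · intro n
    rw [hpsi]
    apply Finset.sum_eq_zero
    intro k hk
    rw [sol_eq_zero b g 0 k (by simp at hk; omega), mul_zero]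
  · intro n t hn hnT ht htT
    set W : ℕ → ℝ := fun j => sol b f n j * sol b g t (j + 1) - sol b f n (j + 1) * sol b g t j
      with hW
    have key : psi n (t + 1) + psi n (t - 1) - psi (n + 1) t - psi (n - 1) t =
        ∑ i ∈ Finset.range T, (W (i + 1) - W i) := by
      rw [hpsi, hpsi, hpsi, hpsi, ← Finset.sum_add_distrib, ← Finset.sum_sub_distrib,
        ← Finset.sum_sub_distrib]
      rw [show Finset.Icc 1 T = Finset.Ico 1 (T + 1) from (Finset.Ico_add_one_right_eq_Icc 1 T).symm,
        Finset.sum_Ico_eq_sum_range]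
      apply Finset.sum_congr (by congr 1)
      intro i _
      have hk : 1 ≤ 1 + i := by omega
      rw [sol_rec b g t (1 + i) ht hk, sol_rec b f n (1 + i) hn hk]
      have h1 : 1 + i - 1 = i := by omega
      have h2 : 1 + i + 1 = i + 1 + 1 := by omega
      have h3 : 1 + i = i + 1 := by omega
      rw [h1, h2, h3, hW]
      ring
    rw [key, Finset.sum_range_sub W]
    have hWT : W T = 0 := by
      rw [hW]
      simp only []
      rw [sol_eq_zero b g t (T + 1) (by omega), sol_eq_zero b f n (T + 1) (by omega)]
      ring
    rw [hWT, hW]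
    simp only []
    rw [sol_zero_right b f n, sol_zero_right b g t, zero_add]
    ring
end

section
/- Let b : ℕ → ℝ be a potential, T ≥ 1, and f, g : ℕ → ℝ controls with f_t = g_t = 0 for t ≥ T. Define the odd extension f̃ : ℕ → ℝ by f̃_t = f_t for 0 ≤ t ≤ T−1, f̃_T = 0, f̃_{T+k} = −f_{T−k} for 1 ≤ k ≤ T−1, and f̃_t = 0 for t ≥ 2T. Then the connecting form is expressed through the boundary values of the solution with extended control: Σ_{n=1}^{T} u^f_{n,T} u^g_{n,T} = Σ_{τ=0}^{T−1} g_τ Σ_{k=0}^{T−1−τ} u^{f̃}_{1, τ+1+2k}. -/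
open Finset

section

variable (b : ℕ → ℝ)

theorem sol_boundary (f : ℕ → ℝ) (t : ℕ) : sol b f t 0 = f t := by
  rcases t with _ | _ | t <;> simp [sol]

theorem sol_initial (f : ℕ → ℝ) {n : ℕ} (hn : n ≠ 0) : sol b f 0 n = 0 := by
  simp [sol, hn]

-- At `t = 0` the truncated `t - 1` is `0`, which encodes `u_{n,-1} = u_{n,0}`.
theorem sol_wave (f : ℕ → ℝ) (t : ℕ) {n : ℕ} (hn : n ≠ 0) :
    sol b f (t + 1) n + sol b f (t - 1) n =
      sol b f t (n + 1) + sol b f t (n - 1) - b n * sol b f t n := by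
  rcases t with _ | t
  · simp [sol, hn]
  · rw [sol.eq_3, if_neg hn, Nat.add_sub_cancel]
    ring

theorem sol_one (f : ℕ → ℝ) {n : ℕ} (hn : n ≠ 0) : sol b f 1 n = if n = 1 then f 0 else 0 := by
  simp [sol, hn, show n - 1 = 0 ↔ n = 1 by omega]

theorem eq_sol_of_wave (f : ℕ → ℝ) {u : ℕ → ℕ → ℝ} (hboundary : ∀ t, u t 0 = f t)
    (hinitial : ∀ n, n ≠ 0 → u 0 n = 0)
    (hwave : ∀ t n, n ≠ 0 →
      u (t + 1) n + u (t - 1) n = u t (n + 1) + u t (n - 1) - b n * u t n) :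
    u = sol b f := by
  funext t n
  induction t using Nat.strong_induction_on generalizing n with
  | _ t ih =>
  rcases eq_or_ne n 0 with rfl | hn
  · rw [hboundary, sol_boundary]
  rcases t with _ | t
  · rw [hinitial n hn, sol_initial b f hn]
  · have hu := hwave t n hn
    rw [ih t t.lt_succ_self, ih t t.lt_succ_self, ih t t.lt_succ_self,
      ih (t - 1) (by omega)] at hu
    linarith [sol_wave b f t hn]

theorem sol_eq_zero_of_lt (f : ℕ → ℝ) {t n : ℕ} (h : t < n) : sol b f t n = 0 := by
  induction t using Nat.strong_induction_on generalizing n with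
  | _ t ih =>
  rcases t with _ | t
  · exact sol_initial b f (by omega)
  · have hw := sol_wave b f t (n := n) (by omega)
    rw [ih t t.lt_succ_self (by omega), ih t t.lt_succ_self (by omega),
      ih t t.lt_succ_self (by omega), ih (t - 1) (by omega) (by omega)] at hw
    linarith

def impulse (t : ℕ) : ℝ := if t = 0 then 1 else 0

theorem impulse_of_ne_zero {t : ℕ} (ht : t ≠ 0) : impulse t = 0 := if_neg ht

theorem sum_range_mul_sol_impulse_of_le (f : ℕ → ℝ) {s N n : ℕ} (hn : n ≠ 0) (hs : s ≤ N) :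
    ∑ τ ∈ range N, f τ * sol b impulse (s - τ) n =
      ∑ τ ∈ range s, f τ * sol b impulse (s - τ) n := by
  refine (sum_subset (range_subset_range.2 hs) fun τ _ hτ => ?_).symm
  rw [Nat.sub_eq_zero_of_le (by simpa using hτ), sol_initial b _ hn, mul_zero]

theorem sol_eq_sum_range_succ_mul_sol_impulse (f : ℕ → ℝ) (t n : ℕ) :
    sol b f t n = ∑ τ ∈ range (t + 1), f τ * sol b impulse (t - τ) n := by
  refine congrFun (congrFun (eq_sol_of_wave b f
    (u := fun t n => ∑ τ ∈ range (t + 1), f τ * sol b impulse (t - τ) n) ?_ ?_ ?_) t) n |>.symm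
  · intro t
    rw [sum_eq_single_of_mem t (self_mem_range_succ t) fun τ hτ hne => ?_]
    · simp [sol_boundary, impulse]
    · rw [sol_boundary, impulse_of_ne_zero (by rw [mem_range] at hτ; omega), mul_zero]
  · intro n hn
    simp [sol_initial b _ hn]
  · intro t n hn
    rw [sum_range_mul_sol_impulse_of_le b f hn (t + 1).le_succ,
      sum_range_mul_sol_impulse_of_le b f hn (t - 1).le_succ,
      ← sum_range_mul_sol_impulse_of_le b f hn (show t - 1 ≤ t + 1 by omega),
      mul_sum, ← sum_add_distrib, ← sum_add_distrib, ← sum_sub_distrib]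
    refine sum_congr rfl fun τ hτ => ?_
    have hτ : τ ≤ t := Nat.lt_succ_iff.1 (mem_range.1 hτ)
    have hw := sol_wave b impulse (t - τ) hn
    rw [show t - τ + 1 = t + 1 - τ by omega, show t - τ - 1 = t - 1 - τ by omega] at hw
    linear_combination f τ * hw

theorem sol_eq_sum_range_mul_sol_impulse (f : ℕ → ℝ) {t N n : ℕ} (hn : n ≠ 0) (ht : t ≤ N) :
    sol b f t n = ∑ τ ∈ range N, f τ * sol b impulse (t - τ) n := by
  rw [sol_eq_sum_range_succ_mul_sol_impulse, sum_range_mul_sol_impulse_of_le b f hn ht,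
    sum_range_mul_sol_impulse_of_le b f hn t.le_succ]

theorem sol_green_identity (f g : ℕ → ℝ) {M p : ℕ} (q : ℕ) (hp : p < M) :
    ∑ n ∈ Icc 1 M, ((sol b f (p + 1) n + sol b f (p - 1) n) * sol b g q n
        - sol b f p n * (sol b g (q + 1) n + sol b g (q - 1) n)) =
      f p * sol b g q 1 - g q * sol b f p 1 := by
  set D : ℕ → ℝ := fun n => sol b f p (n + 1) * sol b g q n - sol b f p n * sol b g q (n + 1)
  have htelescope : ∀ m, ∑ n ∈ Icc 1 m, (D n - D (n - 1)) = D m - D 0 := by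
    intro m
    induction m with
    | zero => simp
    | succ m ih => rw [sum_Icc_succ_top (by omega), ih, Nat.add_sub_cancel]; ring
  have hterm : ∀ n ∈ Icc 1 M, (sol b f (p + 1) n + sol b f (p - 1) n) * sol b g q n
      - sol b f p n * (sol b g (q + 1) n + sol b g (q - 1) n) = D n - D (n - 1) := by
    intro n hn
    have hn0 : n ≠ 0 := Nat.one_le_iff_ne_zero.1 (mem_Icc.1 hn).1
    obtain ⟨m, rfl⟩ : ∃ m, n = m + 1 := ⟨n - 1, by omega⟩
    have hf := sol_wave b f p hn0
    have hg := sol_wave b g q hn0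
    simp only [D, Nat.add_sub_cancel] at hf hg ⊢
    linear_combination sol b g q (m + 1) * hf - sol b f p (m + 1) * hg
  rw [sum_congr rfl hterm, htelescope]
  simp only [D, sol_boundary, sol_eq_zero_of_lt b f hp,
    sol_eq_zero_of_lt b f (hp.trans M.lt_succ_self)]
  ring

noncomputable def impulseResponse (t : ℕ) : ℝ := sol b impulse t 1

theorem impulseResponse_zero : impulseResponse b 0 = 0 := sol_initial b impulse one_ne_zero

noncomputable def impulseGram (M p q : ℕ) : ℝ :=
  ∑ n ∈ Icc 1 M, sol b impulse p n * sol b impulse q n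

theorem impulseGram_zero_left (M q : ℕ) : impulseGram b M 0 q = 0 :=
  sum_eq_zero fun n hn => by
    rw [sol_initial b impulse (Nat.one_le_iff_ne_zero.1 (mem_Icc.1 hn).1), zero_mul]

theorem impulseGram_zero_right (M p : ℕ) : impulseGram b M p 0 = 0 :=
  sum_eq_zero fun n hn => by
    rw [sol_initial b impulse (Nat.one_le_iff_ne_zero.1 (mem_Icc.1 hn).1), mul_zero]

theorem impulseGram_one_left {M : ℕ} (hM : 1 ≤ M) (q : ℕ) :
    impulseGram b M 1 q = impulseResponse b q := by
  rw [impulseGram, sum_eq_single_of_mem 1 (by simpa using hM) fun n hn hne => ?_]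
  · simp [sol_one, impulse, impulseResponse]
  · rw [sol_one b impulse (Nat.one_le_iff_ne_zero.1 (mem_Icc.1 hn).1), if_neg hne, zero_mul]

theorem impulseGram_wave {M p q : ℕ} (hp : p ≠ 0) (hq : q ≠ 0) (hpM : p < M) :
    impulseGram b M (p + 1) q + impulseGram b M (p - 1) q =
      impulseGram b M p (q + 1) + impulseGram b M p (q - 1) := by
  have h := sol_green_identity b impulse impulse q hpM
  rw [impulse_of_ne_zero hp, impulse_of_ne_zero hq, zero_mul, zero_mul, sub_zero] at h
  simp only [impulseGram, ← sum_add_distrib]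
  rw [← sub_eq_zero, ← sum_sub_distrib, ← h]
  exact sum_congr rfl fun n _ => by ring

/- This is `∑_{k<q} ρ(p-q+1+2k)` with `ρ(z) = r(z) - r(-z)` and `r` extended by `0` off the
positive integers, after reindexing `k ↦ q-1-k` in the second half; truncated subtraction is
harmless since `impulseResponse b 0 = 0`. -/
noncomputable def dAlembert (p q : ℕ) : ℝ :=
  ∑ k ∈ range q, (impulseResponse b (p + 1 + 2 * k - q) - impulseResponse b (2 * k + 1 - (p + q)))

theorem dAlembert_zero_left (q : ℕ) : dAlembert b 0 q = 0 :=
  sum_eq_zero fun k _ => by rw [sub_eq_zero]; congr 1; omega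

theorem dAlembert_one_left (q : ℕ) : dAlembert b 1 q = impulseResponse b q := by
  have h := sum_range_sub (fun j => impulseResponse b (2 * j - q)) q
  simp only [impulseResponse_zero, Nat.zero_sub, mul_zero, sub_zero,
    show 2 * q - q = q by omega] at h
  rw [← h, dAlembert]
  exact sum_congr rfl fun k _ => by congr 2 <;> omega

theorem dAlembert_zero_right (p : ℕ) : dAlembert b p 0 = 0 := by
  simp [dAlembert]

theorem dAlembert_succ_right (p q : ℕ) :
    dAlembert b p (q + 1) =
      dAlembert b (p + 1) q + (impulseResponse b (p - q) - impulseResponse b (q - p)) := by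
  simp only [dAlembert, sum_sub_distrib]
  rw [sum_range_succ', sum_range_succ]
  have hA : ∀ k ∈ range q, impulseResponse b (p + 1 + 2 * (k + 1) - (q + 1)) =
      impulseResponse b (p + 1 + 1 + 2 * k - q) := fun k _ => by congr 1; omega
  have hB : ∀ k ∈ range q, impulseResponse b (2 * k + 1 - (p + (q + 1))) =
      impulseResponse b (2 * k + 1 - (p + 1 + q)) := fun k _ => by congr 1; omega
  rw [sum_congr rfl hA, sum_congr rfl hB, show p + 1 + 2 * 0 - (q + 1) = p - q by omega,
    show 2 * q + 1 - (p + (q + 1)) = q - p by omega]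
  ring

theorem dAlembert_wave (p q : ℕ) :
    dAlembert b (p + 2) (q + 1) + dAlembert b p (q + 1) =
      dAlembert b (p + 1) (q + 2) + dAlembert b (p + 1) q := by
  have h₁ := dAlembert_succ_right b (p + 1) (q + 1)
  have h₂ := dAlembert_succ_right b p q
  simp only [Nat.add_sub_add_right] at h₁
  linarith

theorem impulseGram_eq_dAlembert {M p : ℕ} (hp : p ≤ M) (q : ℕ) :
    impulseGram b M p q = dAlembert b p q := by
  induction p using Nat.twoStepInduction generalizing q with
  | zero => rw [impulseGram_zero_left, dAlembert_zero_left]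
  | one => rw [impulseGram_one_left b hp, dAlembert_one_left]
  | more p ih₀ ih₁ =>
    rcases q with _ | q
    · rw [impulseGram_zero_right, dAlembert_zero_right]
    · have hw := impulseGram_wave b (M := M) (p := p + 1) (q := q + 1) p.succ_ne_zero
        q.succ_ne_zero (by omega)
      simp only [Nat.add_sub_cancel, Nat.add_assoc, Nat.reduceAdd] at hw
      linarith [ih₁ (by omega) (q + 2), ih₁ (by omega) q, ih₀ (by omega) (q + 1),
        dAlembert_wave b p q]

theorem sum_Icc_sol_mul_sol (f g : ℕ → ℝ) (M s t : ℕ) :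
    ∑ n ∈ Icc 1 M, sol b f s n * sol b g t n =
      ∑ a ∈ range s, ∑ c ∈ range t, f a * g c * impulseGram b M (s - a) (t - c) := by
  calc ∑ n ∈ Icc 1 M, sol b f s n * sol b g t n
      = ∑ n ∈ Icc 1 M, ∑ a ∈ range s, ∑ c ∈ range t,
          f a * g c * (sol b impulse (s - a) n * sol b impulse (t - c) n) := by
        refine sum_congr rfl fun n hn => ?_
        have hn0 : n ≠ 0 := Nat.one_le_iff_ne_zero.1 (mem_Icc.1 hn).1
        rw [sol_eq_sum_range_mul_sol_impulse b f hn0 le_rfl,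
          sol_eq_sum_range_mul_sol_impulse b g hn0 le_rfl, sum_mul_sum]
        exact sum_congr rfl fun a _ => sum_congr rfl fun c _ => by ring
    _ = _ := by
        rw [sum_comm]
        refine sum_congr rfl fun a _ => ?_
        rw [sum_comm]
        exact sum_congr rfl fun c _ => by rw [impulseGram, mul_sum]

def oddExt (T : ℕ) (f : ℕ → ℝ) (t : ℕ) : ℝ :=
  if t < T then f t else if T < t ∧ t < 2 * T then -f (2 * T - t) else 0

theorem oddExt_mul_eq {T σ : ℕ} (f Φ : ℕ → ℝ) (hΦ : Φ (2 * T) = 0) (hσ : σ ≤ 2 * T) :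
    oddExt T f σ * Φ σ = (if σ ∈ range T then f σ * Φ σ else 0) -
      if 2 * T - σ ∈ range T then f (2 * T - σ) * Φ σ else 0 := by
  rcases hσ.lt_or_eq with hσ | rfl
  · simp only [oddExt, mem_range]
    split_ifs <;> first | omega | ring
  · simp [oddExt, hΦ]

theorem sum_range_oddExt_mul (T : ℕ) (f Φ : ℕ → ℝ) (hΦ : Φ (2 * T) = 0) :
    ∑ σ ∈ range (2 * T), oddExt T f σ * Φ σ = ∑ a ∈ range T, f a * (Φ a - Φ (2 * T - a)) := by
  have hreflect : ∑ σ ∈ range (2 * T + 1),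
      (if 2 * T - σ ∈ range T then f (2 * T - σ) * Φ σ else 0) =
      ∑ a ∈ range (2 * T + 1), if a ∈ range T then f a * Φ (2 * T - a) else 0 := by
    rw [← sum_range_reflect]
    refine sum_congr rfl fun σ hσ => ?_
    rw [Nat.add_sub_cancel, Nat.sub_sub_self (by rw [mem_range] at hσ; omega)]
  calc ∑ σ ∈ range (2 * T), oddExt T f σ * Φ σ
      = ∑ σ ∈ range (2 * T + 1), oddExt T f σ * Φ σ := by simp [sum_range_succ, hΦ]
    _ = ∑ σ ∈ range (2 * T + 1), (if σ ∈ range T then f σ * Φ σ else 0) -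
          ∑ σ ∈ range (2 * T + 1), if 2 * T - σ ∈ range T then f (2 * T - σ) * Φ σ else 0 := by
        rw [← sum_sub_distrib]
        exact sum_congr rfl fun σ hσ => oddExt_mul_eq f Φ hΦ (by rw [mem_range] at hσ; omega)
    _ = ∑ a ∈ range T, f a * (Φ a - Φ (2 * T - a)) := by
        rw [hreflect, sum_ite_mem, sum_ite_mem,
          inter_eq_right.2 (range_subset_range.2 (by omega)), ← sum_sub_distrib]
        simp only [mul_sub]

theorem sol_oddExt_one (T : ℕ) (f : ℕ → ℝ) {m : ℕ} (hm : m < 2 * T) :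
    sol b (oddExt T f) m 1 = ∑ a ∈ range T,
      f a * (impulseResponse b (m - a) - impulseResponse b (m - (2 * T - a))) := by
  rw [sol_eq_sum_range_mul_sol_impulse b _ one_ne_zero hm.le]
  exact sum_range_oddExt_mul T f (fun σ => impulseResponse b (m - σ))
    (by simp [Nat.sub_eq_zero_of_le hm.le, impulseResponse_zero])

theorem sum_sol_oddExt_one (T : ℕ) (f : ℕ → ℝ) {c : ℕ} (hc : c < T) :
    ∑ k ∈ range (T - c), sol b (oddExt T f) (c + 1 + 2 * k) 1 =
      ∑ a ∈ range T, f a * dAlembert b (T - a) (T - c) := by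
  rw [sum_congr rfl fun k hk => sol_oddExt_one b T f (m := c + 1 + 2 * k)
    (by rw [mem_range] at hk; omega), sum_comm]
  refine sum_congr rfl fun a ha => ?_
  have ha : a < T := mem_range.1 ha
  rw [← mul_sum, dAlembert]
  congr 1
  exact sum_congr rfl fun k _ => by congr 2 <;> omega

end

theorem connecting_via_odd_extension_general (b : ℕ → ℝ) (T : ℕ) (f g : ℕ → ℝ)
    (fext : ℕ → ℝ)
    (hext : ∀ t, fext t =
      if t < T then f t else if T < t ∧ t < 2 * T then -f (2 * T - t) else 0) :
    ∑ n ∈ Finset.Icc 1 T, sol b f T n * sol b g T n =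
      ∑ τ ∈ Finset.range T, g τ * ∑ k ∈ Finset.range (T - τ), sol b fext (τ + 1 + 2 * k) 1 := by
  obtain rfl : fext = oddExt T f := funext hext
  rw [sum_Icc_sol_mul_sol, sum_comm]
  refine sum_congr rfl fun c hc => ?_
  rw [sum_sol_oddExt_one b T f (mem_range.1 hc), mul_sum]
  refine sum_congr rfl fun a _ => ?_
  rw [impulseGram_eq_dAlembert b (Nat.sub_le T a)]
  ring

/-- The connecting form expressed through the response of the odd extension of `f`. -/
theorem connecting_via_odd_extension (b : ℕ → ℝ) (T : ℕ) (hT : 1 ≤ T) (f g : ℕ → ℝ)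
    (hf : ∀ t, T ≤ t → f t = 0) (hg : ∀ t, T ≤ t → g t = 0)
    (fext : ℕ → ℝ)
    (hext : ∀ t, fext t =
      if t < T then f t else if T < t ∧ t < 2 * T then -f (2 * T - t) else 0) :
    ∑ n ∈ Finset.Icc 1 T, sol b f T n * sol b g T n =
      ∑ τ ∈ Finset.range T, g τ * ∑ k ∈ Finset.range (T - τ), sol b fext (τ + 1 + 2 * k) 1 :=
  connecting_via_odd_extension_general b T f g fext hext
end

section
/- Let b : ℕ → ℝ be a potential, T ≥ 1, α, β ∈ ℝ, and let y : ℕ → ℝ satisfy y_0 = α, y_1 = β and y_{k+1} + y_{k−1} − b_k y_k = 0 for all k ≥ 1. Define κ : {0,…,T} → ℝ by κ_T = 0, κ_{T−1} = 1, κ_{t−1} = −κ_{t+1} for 1 ≤ t ≤ T−1. Let f : ℕ → ℝ be the unique control with f_t = 0 for t ≥ T such that u^f_{k,T} = y_k for all k = 1,…,T. Then the Krein equation holds: for every control g : ℕ → ℝ with g_t = 0 for t ≥ T, Σ_{n=1}^{T} u^f_{n,T} u^g_{n,T} = Σ_{t=0}^{T−1} κ_t (β g_t − α u^g_{1,t}).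 -/
/-- Finite speed of propagation: `u_{n,t} = 0` for `n > t`. -/
lemma sol_vanish (b g : ℕ → ℝ) : ∀ t n, t < n → sol b g t n = 0 := by
  intro t
  induction t using Nat.strong_induction_on with
  | _ t ih =>
    match t with
    | 0 =>
      intro n hn
      simp only [sol]
      rw [if_neg (by omega)]
    | 1 =>
      intro n hn
      simp only [sol]
      simp only [if_neg (show ¬ n = 0 by omega), if_neg (show ¬ n + 1 = 0 by omega),
        if_neg (show ¬ n - 1 = 0 by omega)]
      ring
    | (t+2) =>
      intro n hn
      simp only [sol]
      rw [if_neg (by omega), ih (t+1) (by omega) (n+1) (by omega),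
        ih (t+1) (by omega) (n-1) (by omega), ih (t+1) (by omega) n (by omega),
        ih t (by omega) n (by omega)]
      ring

lemma sol_boundary_s10 (b g : ℕ → ℝ) : ∀ s, sol b g s 0 = g s := by
  intro s
  match s with
  | 0 => simp [sol]
  | 1 => simp [sol]
  | t+2 => simp [sol]

lemma sol_one_s10 (b g : ℕ → ℝ) (n : ℕ) (hn : 1 ≤ n) :
    sol b g 1 n = sol b g 0 (n+1) + sol b g 0 (n-1) - b n * sol b g 0 n := by
  simp only [sol]
  rw [if_neg (by omega)]

lemma sol_step (b g : ℕ → ℝ) (t n : ℕ) (hn : 1 ≤ n) :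
    sol b g (t+2) n = sol b g (t+1) (n+1) + sol b g (t+1) (n-1)
      - b n * sol b g (t+1) n - sol b g t n := by
  simp only [sol]
  rw [if_neg (by omega)]

/-- Krein equation for the control `f` steering the system to the special solution `y`. -/
theorem krein_equation (b : ℕ → ℝ) (T : ℕ) (hT : 1 ≤ T) (α β : ℝ) (y : ℕ → ℝ)
    (hy0 : y 0 = α) (hy1 : y 1 = β)
    (hy : ∀ k, 1 ≤ k → y (k + 1) + y (k - 1) - b k * y k = 0)
    (kappa : ℕ → ℝ) (hkT : kappa T = 0) (hkT1 : kappa (T - 1) = 1)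
    (hrec : ∀ t, 1 ≤ t → t ≤ T - 1 → kappa (t - 1) = -kappa (t + 1))
    (f : ℕ → ℝ) (hfz : ∀ t, T ≤ t → f t = 0)
    (hfc : ∀ k, 1 ≤ k → k ≤ T → sol b f T k = y k) :
    ∀ g : ℕ → ℝ, (∀ t, T ≤ t → g t = 0) →
      ∑ n ∈ Finset.Icc 1 T, sol b f T n * sol b g T n =
        ∑ t ∈ Finset.range T, kappa t * (β * g t - α * sol b g t 1) := by
  intro g hgz
  set u := sol b g with hu
  set W : ℕ → ℝ := fun t => ∑ n ∈ Finset.Icc 1 (T+1), y n * u t n with hWdef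
  have bn : ∀ n, 1 ≤ n → b n * y n = y (n+1) + y (n-1) := by
    intro n hn; have := hy n hn; linarith
  -- telescoping summation-by-parts identity
  have key : ∀ v : ℕ → ℝ, v (T+1) = 0 → v (T+2) = 0 →
      ∑ n ∈ Finset.Icc 1 (T+1), y n * (v (n+1) + v (n-1) - b n * v n)
        = y 1 * v 0 - y 0 * v 1 := by
    intro v hv1 hv2
    set F : ℕ → ℝ := fun m => y m * v (m+1) - y (m+1) * v m with hF
    have step : ∀ n ∈ Finset.Icc 1 (T+1),
        y n * (v (n+1) + v (n-1) - b n * v n) = F n - F (n-1) := by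
      intro n hn
      obtain ⟨h1, _⟩ := Finset.mem_Icc.mp hn
      have hb := bn n h1
      simp only [hF]
      rw [Nat.sub_add_cancel h1]
      linear_combination (-(v n)) * hb
    rw [Finset.sum_congr rfl step, ← Finset.Ico_add_one_right_eq_Icc, Finset.sum_Ico_eq_sum_range]
    have hTT : T + 1 + 1 - 1 = T + 1 := by omega
    rw [hTT]
    have hshift : ∀ i ∈ Finset.range (T+1), F (1+i) - F (1+i-1) = F (i+1) - F i := by
      intro i _
      have h2 : 1 + i - 1 = i := by omega
      have h1 : 1 + i = i + 1 := by omega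
      rw [h2, h1]
    rw [Finset.sum_congr rfl hshift, Finset.sum_range_sub]
    simp only [hF, hv1, hv2]
    ring
  have hW0 : W 0 = 0 := by
    simp only [hWdef]
    apply Finset.sum_eq_zero
    intro n hn
    obtain ⟨h1, _⟩ := Finset.mem_Icc.mp hn
    rw [hu, sol_vanish b g 0 n (by omega), mul_zero]
  -- main recursion for W
  have hWall : ∀ s, s ≤ T → W (s+1) + W (s-1) = β * g s - α * u s 1 := by
    intro s hs
    have hv1 : u s (T+1) = 0 := sol_vanish b g s (T+1) (by omega)
    have hv2 : u s (T+2) = 0 := sol_vanish b g s (T+2) (by omega)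
    have hv0 : u s 0 = g s := sol_boundary_s10 b g s
    have hkey := key (u s) hv1 hv2
    rw [hv0, hy0, hy1] at hkey
    match s with
    | 0 =>
      rw [Nat.zero_sub, hW0, add_zero, ← hkey]
      simp only [hWdef]
      apply Finset.sum_congr rfl
      intro n hn
      obtain ⟨h1, _⟩ := Finset.mem_Icc.mp hn
      rw [hu, sol_one_s10 b g n h1]
    | m+1 =>
      rw [Nat.add_sub_cancel, ← hkey]
      simp only [hWdef]
      rw [← Finset.sum_add_distrib]
      apply Finset.sum_congr rfl
      intro n hn
      obtain ⟨h1, _⟩ := Finset.mem_Icc.mp hn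
      rw [hu, sol_step b g m n h1]
      ring
  -- Abel summation with the kappa recursion
  have main : ∀ j, 1 ≤ j → j ≤ T →
      ∑ t ∈ Finset.range j, kappa t * (β * g t - α * u t 1)
        = kappa (j-1) * W j - kappa j * W (j-1) := by
    intro j
    induction j with
    | zero => omega
    | succ m ihm =>
      intro _ hjT
      rcases Nat.eq_zero_or_pos m with rfl | hm
      · rw [Finset.sum_range_one]
        have h0 := hWall 0 (by omega)
        rw [Nat.zero_sub, hW0, add_zero] at h0
        simp only [Nat.add_sub_cancel, Nat.zero_add, Nat.sub_self]
        rw [hW0, h0]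
        ring
      · rw [Finset.sum_range_succ, ihm (by omega) (by omega)]
        have h1 := hWall m (by omega)
        have h2 := hrec m (by omega) (by omega)
        simp only [Nat.add_sub_cancel]
        rw [h2, ← h1]
        ring
  have hfin := main T hT le_rfl
  rw [hkT1, hkT] at hfin
  rw [hfin, one_mul, zero_mul, sub_zero]
  have hsplit : ∑ n ∈ Finset.Icc 1 (T+1), y n * u T n
      = (∑ n ∈ Finset.Icc 1 T, y n * u T n) + y (T+1) * u T (T+1) := by
    rw [← Finset.sum_Icc_succ_top (by omega : 1 ≤ T + 1)]
  show _ = ∑ n ∈ Finset.Icc 1 (T+1), y n * u T n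
  rw [hsplit, hu, sol_vanish b g T (T+1) (by omega), mul_zero, add_zero]
  apply Finset.sum_congr rfl
  intro n hn
  obtain ⟨h1, h2⟩ := Finset.mem_Icc.mp hn
  rw [hfc n h1 h2]
end
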